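/- With r(s,t) = R^{H,K}(τ(s),τ(t)) as above (0 < T_1 < T_2, H, K ∈ (0,1)), one has sup_{h ≤ t ≤ 1−2h} | h^{−2HK} (δ_1^h ∘ δ_2^h r)(t+h, t) − 2^{1−K}(2^{2HK+1} − (3^{2HK}+7)/2)(T_2−T_1)^{2HK} | = O(h^{4−2HK}) as h → 0^+; equivalently the limit of h^{−2HK}(δ_1^h∘δ_2^h r)(t+h,t) is g̃ = (2^{2HK+2} − 3^{2HK} − 7) 2^{−K} (T_2−T_1)^{2HK}, uniformly in t. -/

import Mathlib

/-- Covariance of two-parameter (bifractional) Brownian motion. -/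
noncomputable def bifbmCov (H K : ℝ) (s t : ℝ) : ℝ :=
  (2 : ℝ) ^ (-K) * ((s ^ (2 * H) + t ^ (2 * H)) ^ K - |s - t| ^ (2 * H * K))

/-- The rescaled covariance `r(s,t) = R^{H,K}(τ(s), τ(t))` with
`τ(t) = (T₂ - T₁) t + T₁`. -/
noncomputable def bifbmCovRescaled (H K T₁ T₂ : ℝ) (s t : ℝ) : ℝ :=
  bifbmCov H K ((T₂ - T₁) * s + T₁) ((T₂ - T₁) * t + T₁)

/-- Second-order difference operator in the first variable. -/
noncomputable def delta1 (f : ℝ → ℝ → ℝ) (h s t : ℝ) : ℝ :=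
  f (s + h) t + f (s - h) t - 2 * f s t

/-- Second-order difference operator in the second variable. -/
noncomputable def delta2 (f : ℝ → ℝ → ℝ) (h s t : ℝ) : ℝ :=
  f s (t + h) + f s (t - h) - 2 * f s t


open Set



/-- Second difference bound via MVT (with a lazy factor 2). -/
lemma second_diff_bound {g g' g'' : ℝ → ℝ} {x h C : ℝ} (hh : 0 ≤ h)
    (hg : ∀ y ∈ Icc (x - h) (x + h), HasDerivAt g (g' y) y)
    (hg' : ∀ y ∈ Icc (x - h) (x + h), HasDerivAt g' (g'' y) y)
    (hC : ∀ y ∈ Icc (x - h) (x + h), |g'' y| ≤ C) :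
    |g (x + h) + g (x - h) - 2 * g x| ≤ 2 * C * h ^ 2 := by
  have lip : ∀ u ∈ Icc (x - h) (x + h), ∀ v ∈ Icc (x - h) (x + h),
      ‖g' u - g' v‖ ≤ C * ‖u - v‖ := by
    intro u hu v hv
    exact Convex.norm_image_sub_le_of_norm_hasDerivWithin_le
      (fun y hy => (hg' y hy).hasDerivWithinAt)
      (fun y hy => by simpa [Real.norm_eq_abs] using hC y hy)
      (convex_Icc _ _) hv hu
  set p : ℝ → ℝ := fun u => g (x + u) + g (x - u) - 2 * g x with hp
  have hpd : ∀ u ∈ Icc (0:ℝ) h, HasDerivWithinAt p (g' (x + u) - g' (x - u)) (Icc 0 h) u := by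
    intro u hu
    have h1 : x + u ∈ Icc (x - h) (x + h) := by
      constructor <;> [linarith [hu.1, hh]; linarith [hu.2]]
    have h2 : x - u ∈ Icc (x - h) (x + h) := by
      constructor <;> [linarith [hu.2]; linarith [hu.1, hh]]
    have d1 : HasDerivAt (fun u => g (x + u)) (g' (x + u) * 1) u :=
      (hg _ h1).comp u ((hasDerivAt_id u).const_add x)
    have d2 : HasDerivAt (fun u => g (x - u)) (g' (x - u) * (-1)) u :=
      (hg _ h2).comp u ((hasDerivAt_id u).neg.const_add x)
    have : HasDerivAt p (g' (x + u) * 1 + g' (x - u) * (-1) - 0) u := by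
      exact (d1.add d2).sub (hasDerivAt_const u (2 * g x))
    simpa [sub_eq_add_neg] using this.hasDerivWithinAt
  have bound : ∀ u ∈ Icc (0:ℝ) h, ‖g' (x + u) - g' (x - u)‖ ≤ 2 * C * h := by
    intro u hu
    have h1 : x + u ∈ Icc (x - h) (x + h) := by
      constructor <;> [linarith [hu.1, hh]; linarith [hu.2]]
    have h2 : x - u ∈ Icc (x - h) (x + h) := by
      constructor <;> [linarith [hu.2]; linarith [hu.1, hh]]
    have hC0 : 0 ≤ C := le_trans (abs_nonneg _) (hC x (by constructor <;> linarith))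
    calc ‖g' (x + u) - g' (x - u)‖ ≤ C * ‖(x + u) - (x - u)‖ := lip _ h1 _ h2
      _ = C * (2 * u) := by rw [show (x + u) - (x - u) = 2 * u by ring,
            Real.norm_eq_abs, abs_of_nonneg (by linarith [hu.1])]
      _ ≤ 2 * C * h := by nlinarith [hu.2, hu.1]
  have := Convex.norm_image_sub_le_of_norm_hasDerivWithin_le hpd bound (convex_Icc 0 h)
    (left_mem_Icc.2 hh) (right_mem_Icc.2 hh)
  have hp0 : p 0 = 0 := by simp [hp]; ring
  rw [hp0, sub_zero] at this
  calc |g (x + h) + g (x - h) - 2 * g x| = ‖p h‖ := by simp [hp, Real.norm_eq_abs]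
    _ ≤ 2 * C * h * ‖h - 0‖ := this
    _ = 2 * C * h ^ 2 := by rw [Real.norm_eq_abs, sub_zero, abs_of_nonneg hh]; ring


noncomputable def Gf (H K x y : ℝ) : ℝ := (x^(2*H)+y^(2*H))^K

noncomputable def Gy1 (H K x y : ℝ) : ℝ :=
  2*H*y^(2*H-1) * K * (x^(2*H)+y^(2*H))^(K-1)

noncomputable def Gy2 (H K x y : ℝ) : ℝ :=
  2*H*((2*H-1)*y^(2*H-1-1))*K * (x^(2*H)+y^(2*H))^(K-1)
  + 2*H*y^(2*H-1)*K * (2*H*y^(2*H-1) * (K-1) * (x^(2*H)+y^(2*H))^(K-1-1))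

noncomputable def Dx1 (H K x y : ℝ) : ℝ :=
  2*H*((2*H-1)*y^(2*H-1-1))*K * (2*H*x^(2*H-1)*(K-1)*(x^(2*H)+y^(2*H))^(K-1-1))
  + 2*H*y^(2*H-1)*K * (2*H*y^(2*H-1)*(K-1) *
      (2*H*x^(2*H-1)*(K-1-1)*(x^(2*H)+y^(2*H))^(K-1-1-1)))

noncomputable def Dx2 (H K x y : ℝ) : ℝ :=
  2*H*((2*H-1)*y^(2*H-1-1))*K *
    (2*H*((2*H-1)*x^(2*H-1-1))*(K-1) * (x^(2*H)+y^(2*H))^(K-1-1)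
      + 2*H*x^(2*H-1)*(K-1) * (2*H*x^(2*H-1)*(K-1-1)*(x^(2*H)+y^(2*H))^(K-1-1-1)))
  + 2*H*y^(2*H-1)*K * (2*H*y^(2*H-1)*(K-1) *
      (2*H*((2*H-1)*x^(2*H-1-1))*(K-1-1) * (x^(2*H)+y^(2*H))^(K-1-1-1)
       + 2*H*x^(2*H-1)*(K-1-1) * (2*H*x^(2*H-1)*(K-1-1-1)*(x^(2*H)+y^(2*H))^(K-1-1-1-1))))

lemma hasDerivAt_wy (H p x : ℝ) {y : ℝ} (hx : 0 < x) (hy : 0 < y) :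
    HasDerivAt (fun y => (x^(2*H)+y^(2*H))^p)
      (2*H*y^(2*H-1) * p * (x^(2*H)+y^(2*H))^(p-1)) y := by
  have h1 : HasDerivAt (fun y : ℝ => x^(2*H)+y^(2*H)) (2*H*y^(2*H-1)) y :=
    (Real.hasDerivAt_rpow_const (Or.inl hy.ne')).const_add (x^(2*H))
  exact h1.rpow_const (Or.inl (by positivity))

lemma hasDerivAt_wx (H p y : ℝ) {x : ℝ} (hx : 0 < x) (hy : 0 < y) :
    HasDerivAt (fun x => (x^(2*H)+y^(2*H))^p)
      (2*H*x^(2*H-1) * p * (x^(2*H)+y^(2*H))^(p-1)) x := by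
  have h1 : HasDerivAt (fun x : ℝ => x^(2*H)+y^(2*H)) (2*H*x^(2*H-1)) x :=
    (Real.hasDerivAt_rpow_const (Or.inl hx.ne')).add_const (y^(2*H))
  exact h1.rpow_const (Or.inl (by positivity))

lemma hasDerivAt_Gf (H K : ℝ) {x y : ℝ} (hx : 0 < x) (hy : 0 < y) :
    HasDerivAt (fun y => Gf H K x y) (Gy1 H K x y) y := by
  unfold Gf Gy1; exact hasDerivAt_wy H K x hx hy

lemma hasDerivAt_Gy1 (H K : ℝ) {x y : ℝ} (hx : 0 < x) (hy : 0 < y) :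
    HasDerivAt (fun y => Gy1 H K x y) (Gy2 H K x y) y := by
  unfold Gy1 Gy2
  have hb : HasDerivAt (fun y : ℝ => 2*H*y^(2*H-1)*K)
      (2*H*((2*H-1)*y^(2*H-1-1))*K) y :=
    ((Real.hasDerivAt_rpow_const (Or.inl hy.ne')).const_mul (2*H)).mul_const K
  exact hb.mul (hasDerivAt_wy H (K-1) x hx hy)

lemma hasDerivAt_Gy2 (H K : ℝ) {x y : ℝ} (hx : 0 < x) (hy : 0 < y) :
    HasDerivAt (fun x => Gy2 H K x y) (Dx1 H K x y) x := by
  unfold Gy2 Dx1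
  exact ((hasDerivAt_wx H (K-1) y hx hy).const_mul (2*H*((2*H-1)*y^(2*H-1-1))*K)).add
    (((hasDerivAt_wx H (K-1-1) y hx hy).const_mul
      (2*H*y^(2*H-1)*(K-1))).const_mul (2*H*y^(2*H-1)*K))

lemma hasDerivAt_Dx1 (H K : ℝ) {x y : ℝ} (hx : 0 < x) (hy : 0 < y) :
    HasDerivAt (fun x => Dx1 H K x y) (Dx2 H K x y) x := by
  unfold Dx1 Dx2
  have he : HasDerivAt (fun x : ℝ => 2*H*x^(2*H-1)*(K-1)*(x^(2*H)+y^(2*H))^(K-1-1))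
      (2*H*((2*H-1)*x^(2*H-1-1))*(K-1) * (x^(2*H)+y^(2*H))^(K-1-1)
        + 2*H*x^(2*H-1)*(K-1) * (2*H*x^(2*H-1)*(K-1-1)*(x^(2*H)+y^(2*H))^(K-1-1-1))) x :=
    (((Real.hasDerivAt_rpow_const (Or.inl hx.ne')).const_mul (2*H)).mul_const (K-1)).mul
      (hasDerivAt_wx H (K-1-1) y hx hy)
  have hg : HasDerivAt (fun x : ℝ => 2*H*x^(2*H-1)*(K-1-1)*(x^(2*H)+y^(2*H))^(K-1-1-1))
      (2*H*((2*H-1)*x^(2*H-1-1))*(K-1-1) * (x^(2*H)+y^(2*H))^(K-1-1-1)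
        + 2*H*x^(2*H-1)*(K-1-1) * (2*H*x^(2*H-1)*(K-1-1-1)*(x^(2*H)+y^(2*H))^(K-1-1-1-1))) x :=
    (((Real.hasDerivAt_rpow_const (Or.inl hx.ne')).const_mul (2*H)).mul_const (K-1-1)).mul
      (hasDerivAt_wx H (K-1-1-1) y hx hy)
  exact (he.const_mul (2*H*((2*H-1)*y^(2*H-1-1))*K)).add
    ((hg.const_mul (2*H*y^(2*H-1)*(K-1))).const_mul (2*H*y^(2*H-1)*K))
lemma continuousOn_Dx2 (H K a b : ℝ) (ha : 0 < a) :
    ContinuousOn (fun p : ℝ × ℝ => Dx2 H K p.1 p.2) (Icc a b ×ˢ Icc a b) := by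
  have h1 : ∀ q : ℝ, ContinuousOn (fun p : ℝ × ℝ => p.1 ^ q) (Icc a b ×ˢ Icc a b) :=
    fun q => continuousOn_fst.rpow_const fun p hp =>
      Or.inl (ne_of_gt (lt_of_lt_of_le ha hp.1.1))
  have h2 : ∀ q : ℝ, ContinuousOn (fun p : ℝ × ℝ => p.2 ^ q) (Icc a b ×ˢ Icc a b) :=
    fun q => continuousOn_snd.rpow_const fun p hp =>
      Or.inl (ne_of_gt (lt_of_lt_of_le ha hp.2.1))
  have hw : ∀ q : ℝ, ContinuousOn (fun p : ℝ × ℝ => (p.1^(2*H)+p.2^(2*H)) ^ q)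
      (Icc a b ×ˢ Icc a b) := by
    intro q
    refine ((h1 (2*H)).add (h2 (2*H))).rpow_const fun p hp => Or.inl ?_
    have hx : 0 < p.1 := lt_of_lt_of_le ha hp.1.1
    have hy : 0 < p.2 := lt_of_lt_of_le ha hp.2.1
    exact (add_pos (Real.rpow_pos_of_pos hx _) (Real.rpow_pos_of_pos hy _)).ne'
  unfold Dx2
  exact ((((continuousOn_const.mul (continuousOn_const.mul (h2 _))).mul
      continuousOn_const).mul
      ((((continuousOn_const.mul (continuousOn_const.mul (h1 _))).mul
        continuousOn_const).mul (hw _)).add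
       (((continuousOn_const.mul (h1 _)).mul continuousOn_const).mul
        (((continuousOn_const.mul (h1 _)).mul continuousOn_const).mul (hw _))))).add
    (((continuousOn_const.mul (h2 _)).mul continuousOn_const).mul
      ((((continuousOn_const.mul (h2 _)).mul continuousOn_const)).mul
       ((((continuousOn_const.mul (continuousOn_const.mul (h1 _))).mul
          continuousOn_const).mul (hw _)).add
        (((continuousOn_const.mul (h1 _)).mul continuousOn_const).mul
         (((continuousOn_const.mul (h1 _)).mul continuousOn_const).mul (hw _)))))))

noncomputable def DG (H K x k : ℝ) : ℝ :=
  (Gf H K (x+2*k) (x+k) + Gf H K x (x+k) - 2 * Gf H K (x+k) (x+k))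
  + (Gf H K (x+2*k) (x-k) + Gf H K x (x-k) - 2 * Gf H K (x+k) (x-k))
  - 2 * (Gf H K (x+2*k) x + Gf H K x x - 2 * Gf H K (x+k) x)

lemma deltaG_bound (H K a b C₂ : ℝ) (ha : 0 < a)
    (hC₂ : ∀ u ∈ Icc a b, ∀ v ∈ Icc a b, |Dx2 H K u v| ≤ C₂)
    {x k : ℝ} (hk : 0 < k) (h1 : a ≤ x - k) (h2 : x + 2*k ≤ b) :
    |DG H K x k| ≤ 4 * C₂ * k ^ 4 := by
  have hxpos : ∀ u ∈ Icc (x-k) (x+k), 0 < u ∧ u ∈ Icc a b := by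
    intro u hu
    refine ⟨lt_of_lt_of_le ha (le_trans h1 hu.1), le_trans h1 hu.1, by linarith [hu.2, hk]⟩
  have hx2k : x + 2*k ∈ Icc a b := ⟨by linarith, h2⟩
  have hx : x ∈ Icc a b := ⟨by linarith, by linarith⟩
  have hxk : x + k ∈ Icc a b := ⟨by linarith, by linarith⟩
  have hx2kpos : 0 < x + 2*k := lt_of_lt_of_le ha hx2k.1
  have hxpos' : 0 < x := lt_of_lt_of_le ha hx.1
  have hxkpos : 0 < x + k := lt_of_lt_of_le ha hxk.1
  -- inner bound: second x-difference of Gy2 at center x+k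
  have inner : ∀ y ∈ Icc (x-k) (x+k),
      |Gy2 H K (x+2*k) y + Gy2 H K x y - 2 * Gy2 H K (x+k) y| ≤ 2 * C₂ * k ^ 2 := by
    intro y hy
    obtain ⟨hy0, hyab⟩ := hxpos y hy
    have hb := second_diff_bound (g := fun u => Gy2 H K u y) (g' := fun u => Dx1 H K u y)
      (g'' := fun u => Dx2 H K u y) (x := x + k) (h := k) (C := C₂) hk.le
      (fun u hu => hasDerivAt_Gy2 H K (by linarith [hu.1]) hy0)
      (fun u hu => hasDerivAt_Dx1 H K (by linarith [hu.1]) hy0)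
      (fun u hu => hC₂ u ⟨by linarith [hu.1], by linarith [hu.2]⟩ y hyab)
    rw [show x + k + k = x + 2*k by ring, show x + k - k = x by ring] at hb
    exact hb
  have outer := second_diff_bound
    (g := fun y => Gf H K (x+2*k) y + Gf H K x y - 2 * Gf H K (x+k) y)
    (g' := fun y => Gy1 H K (x+2*k) y + Gy1 H K x y - 2 * Gy1 H K (x+k) y)
    (g'' := fun y => Gy2 H K (x+2*k) y + Gy2 H K x y - 2 * Gy2 H K (x+k) y)
    (x := x) (h := k) (C := 2 * C₂ * k ^ 2) hk.le
    (fun y hy => (((hasDerivAt_Gf H K hx2kpos (hxpos y hy).1).add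
        (hasDerivAt_Gf H K hxpos' (hxpos y hy).1)).sub
        ((hasDerivAt_Gf H K hxkpos (hxpos y hy).1).const_mul 2)))
    (fun y hy => (((hasDerivAt_Gy1 H K hx2kpos (hxpos y hy).1).add
        (hasDerivAt_Gy1 H K hxpos' (hxpos y hy).1)).sub
        ((hasDerivAt_Gy1 H K hxkpos (hxpos y hy).1).const_mul 2)))
    inner
  calc |DG H K x k| ≤ 2 * (2 * C₂ * k ^ 2) * k ^ 2 := by
        simpa [DG] using outer
    _ = 4 * C₂ * k ^ 4 := by ring

lemma key_identity (H K T₁ T₂ h t : ℝ) (hc : 0 < T₂ - T₁) (hh : 0 < h)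
    (hHK : 0 < 2*H*K) :
    delta1 (fun s t' => delta2 (bifbmCovRescaled H K T₁ T₂) h s t') h (t + h) t
    = 2^(-K) * DG H K ((T₂-T₁)*t+T₁) ((T₂-T₁)*h)
      + (2^(2*H*K+2) - 3^(2*H*K) - 7) * 2^(-K) * (T₂-T₁)^(2*H*K) * h^(2*H*K) := by
  have hch : (0:ℝ) < (T₂-T₁)*h := by positivity
  simp only [delta1, delta2, bifbmCovRescaled, bifbmCov, DG, Gf]
  rw [show (T₂-T₁)*(t+h+h)+T₁ - ((T₂-T₁)*(t+h)+T₁) = (T₂-T₁)*h from by ring,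
      show (T₂-T₁)*(t+h+h)+T₁ - ((T₂-T₁)*(t-h)+T₁) = 3*((T₂-T₁)*h) from by ring,
      show (T₂-T₁)*(t+h+h)+T₁ - ((T₂-T₁)*t+T₁) = 2*((T₂-T₁)*h) from by ring,
      show (T₂-T₁)*(t+h-h)+T₁ - ((T₂-T₁)*(t+h)+T₁) = -((T₂-T₁)*h) from by ring,
      show (T₂-T₁)*(t+h-h)+T₁ - ((T₂-T₁)*(t-h)+T₁) = (T₂-T₁)*h from by ring,
      show (T₂-T₁)*(t+h-h)+T₁ - ((T₂-T₁)*t+T₁) = (0:ℝ) from by ring,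
      show (T₂-T₁)*(t+h)+T₁ - ((T₂-T₁)*(t+h)+T₁) = (0:ℝ) from by ring,
      show (T₂-T₁)*(t+h)+T₁ - ((T₂-T₁)*(t-h)+T₁) = 2*((T₂-T₁)*h) from by ring,
      show (T₂-T₁)*(t+h)+T₁ - ((T₂-T₁)*t+T₁) = (T₂-T₁)*h from by ring]
  have e1 : |(T₂-T₁)*h| = (T₂-T₁)*h := abs_of_pos hch
  have e2 : |3*((T₂-T₁)*h)| = 3*((T₂-T₁)*h) := abs_of_pos (by positivity)
  have e3 : |2*((T₂-T₁)*h)| = 2*((T₂-T₁)*h) := abs_of_pos (by positivity)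
  have e4 : |-((T₂-T₁)*h)| = (T₂-T₁)*h := by rw [abs_neg]; exact e1
  simp only [e1, e2, e3, e4, abs_zero]
  have p0 : (0:ℝ)^(2*H*K) = 0 := Real.zero_rpow hHK.ne'
  have p1 : ((T₂-T₁)*h)^(2*H*K) = (T₂-T₁)^(2*H*K)*h^(2*H*K) :=
    Real.mul_rpow hc.le hh.le
  have p3 : (3*((T₂-T₁)*h))^(2*H*K) = 3^(2*H*K)*((T₂-T₁)^(2*H*K)*h^(2*H*K)) := by
    rw [Real.mul_rpow (by norm_num) hch.le, p1]
  have p2 : (2*((T₂-T₁)*h))^(2*H*K) = 2^(2*H*K)*((T₂-T₁)^(2*H*K)*h^(2*H*K)) := by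
    rw [Real.mul_rpow (by norm_num) hch.le, p1]
  have p4 : (2:ℝ)^(2*H*K+2) = 2^(2*H*K)*4 := by
    rw [Real.rpow_add (by norm_num : (0:ℝ) < 2)]
    norm_num
  simp only [p0, p1, p2, p3, p4]
  simp only [show (T₂-T₁)*(t+h+h)+T₁ = (T₂-T₁)*t+T₁+2*((T₂-T₁)*h) from by ring,
      show (T₂-T₁)*(t+h-h)+T₁ = (T₂-T₁)*t+T₁ from by ring,
      show (T₂-T₁)*(t+h)+T₁ = (T₂-T₁)*t+T₁+(T₂-T₁)*h from by ring,
      show (T₂-T₁)*(t-h)+T₁ = (T₂-T₁)*t+T₁-(T₂-T₁)*h from by ring]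
  ring

theorem bifbm_offdiag_expansion (H K T₁ T₂ : ℝ) (hH0 : 0 < H) (hH1 : H < 1)
    (hK0 : 0 < K) (hK1 : K < 1) (hT1 : 0 < T₁) (hT : T₁ < T₂) :
    ∃ M : ℝ, ∃ h₀ > (0 : ℝ), ∀ h : ℝ, 0 < h → h ≤ h₀ →
      ∀ t : ℝ, h ≤ t → t ≤ 1 - 2 * h →
      |h ^ (-(2 * H * K))
          * delta1 (fun s t' => delta2 (bifbmCovRescaled H K T₁ T₂) h s t') h (t + h) t
        - (2 ^ (2 * H * K + 2) - 3 ^ (2 * H * K) - 7) * 2 ^ (-K)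
            * (T₂ - T₁) ^ (2 * H * K)|
        ≤ M * h ^ (4 - 2 * H * K) := by
  have hc : 0 < T₂ - T₁ := sub_pos.2 hT
  obtain ⟨C₂, hC₂'⟩ := (isCompact_Icc.prod isCompact_Icc).exists_bound_of_continuousOn
    (continuousOn_Dx2 H K T₁ T₂ hT1)
  have hC₂ : ∀ u ∈ Icc T₁ T₂, ∀ v ∈ Icc T₁ T₂, |Dx2 H K u v| ≤ C₂ := fun u hu v hv => by
    simpa [Real.norm_eq_abs] using hC₂' (u, v) (Set.mk_mem_prod hu hv)
  refine ⟨2^(-K) * (4 * C₂ * (T₂-T₁)^4), 1, one_pos, ?_⟩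
  intro h hh _ t ht1 ht2
  have hk : 0 < (T₂-T₁)*h := by positivity
  have hb1 : T₁ ≤ ((T₂-T₁)*t+T₁) - (T₂-T₁)*h := by nlinarith
  have hb2 : ((T₂-T₁)*t+T₁) + 2*((T₂-T₁)*h) ≤ T₂ := by nlinarith
  have hDG := deltaG_bound H K T₁ T₂ C₂ hT1 hC₂ hk hb1 hb2
  have hpow : h^(-(2*H*K)) * h^(2*H*K) = 1 := by
    rw [← Real.rpow_add hh]; simp
  have hkey := key_identity H K T₁ T₂ h t hc hh (by positivity)
  rw [hkey]
  have hexp : h ^ (-(2*H*K)) * (2^(-K) * DG H K ((T₂-T₁)*t+T₁) ((T₂-T₁)*h)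
      + (2^(2*H*K+2) - 3^(2*H*K) - 7) * 2^(-K) * (T₂-T₁)^(2*H*K) * h^(2*H*K))
      - (2^(2*H*K+2) - 3^(2*H*K) - 7) * 2^(-K) * (T₂-T₁)^(2*H*K)
      = h^(-(2*H*K)) * 2^(-K) * DG H K ((T₂-T₁)*t+T₁) ((T₂-T₁)*h) := by
    linear_combination (2^(2*H*K+2) - 3^(2*H*K) - 7) * 2^(-K) * (T₂-T₁)^(2*H*K) * hpow
  rw [hexp]
  have h1 : |h^(-(2*H*K))| = h^(-(2*H*K)) := abs_of_pos (Real.rpow_pos_of_pos hh _)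
  have h2 : |(2:ℝ)^(-K)| = (2:ℝ)^(-K) := abs_of_pos (Real.rpow_pos_of_pos two_pos _)
  rw [abs_mul, abs_mul, h1, h2]
  have h4 : h^((4:ℝ)-2*H*K) = h^(-(2*H*K)) * h^(4:ℕ) := by
    rw [← Real.rpow_natCast h 4, ← Real.rpow_add hh]
    congr 1; push_cast; ring
  calc h^(-(2*H*K)) * 2^(-K) * |DG H K ((T₂-T₁)*t+T₁) ((T₂-T₁)*h)|
      ≤ h^(-(2*H*K)) * 2^(-K) * (4 * C₂ * ((T₂-T₁)*h)^4) :=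
        mul_le_mul_of_nonneg_left hDG (by positivity)
    _ = 2^(-K) * (4 * C₂ * (T₂-T₁)^4) * h^(4-2*H*K) := by rw [h4]; ring
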